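/- arXiv:1002.1104 — 2 statements merged into one kernel-verified Lean document; each statement's English description precedes it below -/
import Mathlib

section
/- Fix integers k ≥ 2 and s ≥ 2, constants γ > 0 and 0 < c ≤ (k−1)(1−1/s), and consider for each n the random dataset model with common item probability p = γ/n and t = t(n) transactions with t(n) = Θ(n^c). Then as n → ∞, b_2(s) = O(n^{2k(1−s) + s(k−1+c) − k + 1}). -/
open MeasureTheory ProbabilityTheory Finset Filter Asymptotics

noncomputable section

namespace PaperModel

variable {Ω : Type*}

/-- Support of itemset `X` in the dataset given by the Bernoulli family `A`. -/
def support {n t : ℕ} (A : Fin t → Fin n → Ω → Bool) (X : Finset (Fin n)) (ω : Ω) : ℕ :=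
  (Finset.univ.filter fun j => ∀ i ∈ X, A j i ω = true).card

/-- Indicator `Z_X` of the event that the support of `X` is at least `s`. -/
def Z {n t : ℕ} (A : Fin t → Fin n → Ω → Bool) (s : ℕ) (X : Finset (Fin n)) (ω : Ω) : ℝ :=
  if s ≤ support A X ω then 1 else 0

/-- `Q̂_{k,s}`: the number of `k`-itemsets with support at least `s`. -/
def Qhat {n t : ℕ} (A : Fin t → Fin n → Ω → Bool) (k s : ℕ) (ω : Ω) : ℕ :=
  ((Finset.univ.powersetCard k).filter fun X => s ≤ support A X ω).card

/-- `p_X = Pr(Z_X = 1)`. -/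
def pX [MeasurableSpace Ω] (μ : Measure Ω) {n t : ℕ} (A : Fin t → Fin n → Ω → Bool)
    (s : ℕ) (X : Finset (Fin n)) : ℝ :=
  (μ {ω | s ≤ support A X ω}).toReal

/-- `E[Z_X Z_Y] = Pr(Z_X = 1 ∧ Z_Y = 1)`. -/
def pXY [MeasurableSpace Ω] (μ : Measure Ω) {n t : ℕ} (A : Fin t → Fin n → Ω → Bool)
    (s : ℕ) (X Y : Finset (Fin n)) : ℝ :=
  (μ ({ω | s ≤ support A X ω} ∩ {ω | s ≤ support A Y ω})).toReal

/-- `b_1(s) = Σ_{|X|=k} Σ_{Y ∈ I(X)} p_X p_Y`. -/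
def b1 [MeasurableSpace Ω] (μ : Measure Ω) {n t : ℕ} (A : Fin t → Fin n → Ω → Bool)
    (k s : ℕ) : ℝ :=
  ∑ X ∈ Finset.univ.powersetCard k,
    ∑ Y ∈ (Finset.univ.powersetCard k).filter (fun Y => Y ∩ X ≠ ∅),
      pX μ A s X * pX μ A s Y

/-- `b_2(s) = Σ_{|X|=k} Σ_{X ≠ Y ∈ I(X)} E[Z_X Z_Y]`. -/
def b2 [MeasurableSpace Ω] (μ : Measure Ω) {n t : ℕ} (A : Fin t → Fin n → Ω → Bool)
    (k s : ℕ) : ℝ :=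
  ∑ X ∈ Finset.univ.powersetCard k,
    ∑ Y ∈ (Finset.univ.powersetCard k).filter (fun Y => Y ∩ X ≠ ∅ ∧ Y ≠ X),
      pXY μ A s X Y

/-- Probability that a Poisson random variable with mean `lam` lands in `S ⊆ ℕ`. -/
def poissonProb (lam : ℝ) (S : Set ℕ) : ℝ :=
  ∑' j : S, Real.exp (-lam) * lam ^ (j : ℕ) / (Nat.factorial (j : ℕ) : ℝ)

/-!
`Z_X Z_Y = 1` forces some `s`-set `S` of transactions to contain `X` and some `s`-set `T` to
contain `Y`. A union bound over `(S, T)` and independence give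
`E[Z_X Z_Y] ≤ ∑_{S,T} p ^ #(S ×ˢ X ∪ T ×ˢ Y) = ∑_{S,T} p ^ (2ks - #(S ∩ T) #(X ∩ Y))`.
Grouping the pairs by `i = #(X ∩ Y) ∈ [1, k-1]` and `r = #(S ∩ T) ∈ [0, s]` leaves
`O(n^(2k-i) t^(2s-r) n^(-(2ks-ir)))` for each `(i, r)`. The exponent is affine in `r`; it is at
most the claimed one at `r = s` because `i ≤ k-1`, and at `r = 0` because `c ≤ (k-1)(1-1/s)`.
-/

section Counting

variable {α : Type*} [Fintype α] [DecidableEq α]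

theorem card_powersetCard_filter_card_inter_eq_le (A : Finset α) (m i : ℕ) :
    #{B ∈ univ.powersetCard m | #(B ∩ A) = i} ≤ (#A).choose i * Fintype.card α ^ (m - i) := by
  calc #{B ∈ univ.powersetCard m | #(B ∩ A) = i}
      ≤ #(A.powersetCard i ×ˢ univ.powersetCard (m - i)) := by
        refine card_le_card_of_injOn (fun B => (B ∩ A, B \ A)) (fun B hB => ?_) ?_
        · simp only [mem_coe, mem_filter, mem_powersetCard, subset_univ, true_and] at hB
          have := card_inter_add_card_sdiff B A
          simp only [mem_coe, mem_product, mem_powersetCard, inter_subset_right, subset_univ,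
            true_and]
          omega
        · intro B _ B' _ h
          simp only [Prod.mk.injEq] at h
          rw [← sdiff_union_inter B A, ← sdiff_union_inter B' A, h.1, h.2]
    _ ≤ (#A).choose i * Fintype.card α ^ (m - i) := by
        rw [card_product, card_powersetCard, card_powersetCard, card_univ]
        exact Nat.mul_le_mul_left _ (Nat.choose_le_pow _ _)

theorem sum_card_inter_le {m : ℕ} (A : Finset α) (F : Finset (Finset α))
    (hF : F ⊆ univ.powersetCard m) (I : Finset ℕ) (hI : ∀ B ∈ F, #(B ∩ A) ∈ I)
    (g : ℕ → ℝ) (hg : ∀ i ∈ I, 0 ≤ g i) :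
    ∑ B ∈ F, g #(B ∩ A) ≤ ∑ i ∈ I, ((#A).choose i * Fintype.card α ^ (m - i) : ℝ) * g i := by
  rw [← sum_fiberwise_of_maps_to hI]
  refine sum_le_sum fun i hi => ?_
  rw [sum_congr rfl fun B hB => congrArg g (mem_filter.mp hB).2, sum_const, nsmul_eq_mul]
  refine mul_le_mul_of_nonneg_right ?_ (hg i hi)
  exact_mod_cast (card_le_card (filter_subset_filter _ hF)).trans
    (card_powersetCard_filter_card_inter_eq_le A m i)

theorem sum_sum_card_inter_le {m : ℕ} (F : Finset α → Finset (Finset α))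
    (hF : ∀ A, F A ⊆ univ.powersetCard m) (I : Finset ℕ)
    (hI : ∀ A ∈ univ.powersetCard m, ∀ B ∈ F A, #(B ∩ A) ∈ I)
    (g : ℕ → ℝ) (hg : ∀ i ∈ I, 0 ≤ g i) :
    ∑ A ∈ univ.powersetCard m, ∑ B ∈ F A, g #(B ∩ A)
      ≤ ∑ i ∈ I, (Fintype.card α ^ m * (m.choose i * Fintype.card α ^ (m - i)) : ℝ) * g i := by
  set N := Fintype.card α
  have hinner : ∀ A ∈ univ.powersetCard m, ∑ B ∈ F A, g #(B ∩ A)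
      ≤ ∑ i ∈ I, (m.choose i * N ^ (m - i) : ℝ) * g i := fun A hA => by
    simpa [(mem_powersetCard.mp hA).2] using sum_card_inter_le A (F A) (hF A) I (hI A hA) g hg
  have hcard : (#(univ.powersetCard m : Finset (Finset α)) : ℝ) ≤ N ^ m := by
    rw [card_powersetCard, card_univ]
    exact_mod_cast Nat.choose_le_pow _ _
  calc ∑ A ∈ univ.powersetCard m, ∑ B ∈ F A, g #(B ∩ A)
      ≤ #(univ.powersetCard m : Finset (Finset α)) •
          ∑ i ∈ I, (m.choose i * N ^ (m - i) : ℝ) * g i := sum_le_card_nsmul _ _ _ hinner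
    _ ≤ N ^ m * ∑ i ∈ I, (m.choose i * N ^ (m - i) : ℝ) * g i := by
        rw [nsmul_eq_mul]
        exact mul_le_mul_of_nonneg_right hcard
          (sum_nonneg fun i hi => mul_nonneg (by positivity) (hg i hi))
    _ = _ := by
        rw [mul_sum]
        exact sum_congr rfl fun i _ => by ring

end Counting

theorem card_product_union_product {β γ : Type*} [DecidableEq β] [DecidableEq γ]
    (S T : Finset β) (X Y : Finset γ) :
    #(S ×ˢ X ∪ T ×ˢ Y) = #S * #X + #T * #Y - #(S ∩ T) * #(X ∩ Y) := by
  have h := card_union_add_card_inter (S ×ˢ X) (T ×ˢ Y)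
  rw [product_inter_product, card_product, card_product, card_product] at h
  omega

theorem card_inter_mem_Icc_of_ne {β : Type*} [DecidableEq β] {k : ℕ} {X Y : Finset β}
    (hX : #X = k) (hY : #Y = k) (hYX : Y ∩ X ≠ ∅) (hne : Y ≠ X) :
    #(Y ∩ X) ∈ Icc 1 (k - 1) := by
  have hpos : 0 < #(Y ∩ X) := card_pos.mpr (nonempty_iff_ne_empty.mpr hYX)
  have hle : #(Y ∩ X) ≤ k := hY ▸ card_le_card inter_subset_left
  have hne' : #(Y ∩ X) ≠ k := fun h =>
    hne <| (eq_of_subset_of_card_le inter_subset_left (by omega)).symm.trans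
      (eq_of_subset_of_card_le inter_subset_right (by omega))
  exact mem_Icc.mpr ⟨hpos, by omega⟩

theorem measure_biInter_eq_true {Ω ι : Type*} [MeasurableSpace Ω] {μ : Measure Ω}
    {B : ι → Ω → Bool} (hindep : iIndepFun B μ) {p : ENNReal}
    (hB : ∀ q, μ {ω | B q ω = true} = p) (D : Finset ι) :
    μ (⋂ q ∈ D, {ω | B q ω = true}) = p ^ #D := by
  rw [hindep.meas_biInter (s := fun q => {ω | B q ω = true}) fun q _ => ⟨{true}, trivial, rfl⟩,
    prod_congr rfl fun q _ => hB q, prod_const]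

section Model

variable {n t : ℕ} {A : Fin t → Fin n → Ω → Bool}

theorem setOf_le_support_subset (s : ℕ) (X : Finset (Fin n)) :
    {ω | s ≤ support A X ω} ⊆
      ⋃ S ∈ univ.powersetCard s, ⋂ q ∈ S ×ˢ X, {ω | A q.1 q.2 ω = true} := by
  intro ω hω
  obtain ⟨S, hS, hcard⟩ := exists_subset_card_eq hω
  refine Set.mem_biUnion (mem_powersetCard.mpr ⟨subset_univ _, hcard⟩) ?_
  simp only [Set.mem_iInter, mem_product]
  exact fun q hq => (mem_filter.mp (hS hq.1)).2 q.2 hq.2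

variable [MeasurableSpace Ω] {μ : Measure Ω}

theorem pXY_le_sum_sum (hindep : iIndepFun (fun q : Fin t × Fin n => A q.1 q.2) μ)
    {p : ℝ} (hp : 0 ≤ p) (hA : ∀ j i, μ {ω | A j i ω = true} = ENNReal.ofReal p)
    {k s : ℕ} {X Y : Finset (Fin n)} (hX : #X = k) (hY : #Y = k) :
    pXY μ A s X Y ≤ ∑ S ∈ (univ : Finset (Fin t)).powersetCard s, ∑ T ∈ univ.powersetCard s,
      p ^ (2 * k * s - #(T ∩ S) * #(Y ∩ X)) := by
  set E : Finset (Fin t × Fin n) → Set Ω := fun D => ⋂ q ∈ D, {ω | A q.1 q.2 ω = true}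
  have hcover : {ω | s ≤ support A X ω} ∩ {ω | s ≤ support A Y ω} ⊆
      ⋃ S ∈ univ.powersetCard s, ⋃ T ∈ univ.powersetCard s, E (S ×ˢ X ∪ T ×ˢ Y) := by
    rintro ω ⟨hωX, hωY⟩
    obtain ⟨S, hS, hSω⟩ := Set.mem_iUnion₂.mp (setOf_le_support_subset s X hωX)
    obtain ⟨T, hT, hTω⟩ := Set.mem_iUnion₂.mp (setOf_le_support_subset s Y hωY)
    simp only [Set.mem_iUnion, Set.mem_iInter, E] at hSω hTω ⊢
    exact ⟨S, hS, T, hT, fun q hq => (mem_union.mp hq).elim (hSω q) (hTω q)⟩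
  have hE : ∀ S ∈ univ.powersetCard s, ∀ T ∈ univ.powersetCard s,
      μ (E (S ×ˢ X ∪ T ×ˢ Y)) = ENNReal.ofReal (p ^ (2 * k * s - #(T ∩ S) * #(Y ∩ X))) := by
    intro S hS T hT
    rw [measure_biInter_eq_true hindep (fun q => hA q.1 q.2), ENNReal.ofReal_pow hp,
      card_product_union_product, (mem_powersetCard.mp hS).2, (mem_powersetCard.mp hT).2,
      hX, hY, inter_comm T, inter_comm Y]
    ring_nf
  refine ENNReal.toReal_le_of_le_ofReal (by positivity) ?_
  calc μ ({ω | s ≤ support A X ω} ∩ {ω | s ≤ support A Y ω})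
      ≤ ∑ S ∈ univ.powersetCard s, ∑ T ∈ univ.powersetCard s, μ (E (S ×ˢ X ∪ T ×ˢ Y)) :=
        (measure_mono hcover).trans <| (measure_biUnion_finset_le _ _).trans <|
          sum_le_sum fun S _ => measure_biUnion_finset_le _ _
    _ = _ := by
        rw [ENNReal.ofReal_sum_of_nonneg fun S _ => by positivity]
        refine sum_congr rfl fun S hS => ?_
        rw [ENNReal.ofReal_sum_of_nonneg fun T _ => by positivity]
        exact sum_congr rfl fun T hT => hE S hS T hT

theorem b2_nonneg (k s : ℕ) : 0 ≤ b2 μ A k s :=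
  sum_nonneg fun _ _ => sum_nonneg fun _ _ => ENNReal.toReal_nonneg

theorem b2_le_sum (hindep : iIndepFun (fun q : Fin t × Fin n => A q.1 q.2) μ)
    {p : ℝ} (hp : 0 ≤ p) (hA : ∀ j i, μ {ω | A j i ω = true} = ENNReal.ofReal p) (k s : ℕ) :
    b2 μ A k s ≤ ∑ i ∈ Icc 1 (k - 1), (n ^ k * (k.choose i * n ^ (k - i)) : ℝ) *
      ∑ r ∈ range (s + 1), (t ^ s * (s.choose r * t ^ (s - r)) : ℝ) * p ^ (2 * k * s - r * i) := by
  set g : ℕ → ℝ := fun i =>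
    ∑ r ∈ range (s + 1), (t ^ s * (s.choose r * t ^ (s - r)) : ℝ) * p ^ (2 * k * s - r * i)
  have hpairs : ∀ i, ∑ S ∈ (univ : Finset (Fin t)).powersetCard s,
      ∑ T ∈ (univ : Finset (Fin t)).powersetCard s, p ^ (2 * k * s - #(T ∩ S) * i) ≤ g i :=
    fun i => by
      simpa only [Fintype.card_fin] using sum_sum_card_inter_le (α := Fin t)
        (fun _ => univ.powersetCard s) (fun _ => subset_rfl) (range (s + 1))
        (fun S hS T _ => mem_range_succ_iff.mpr <|
          (mem_powersetCard.mp hS).2 ▸ card_le_card inter_subset_right)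
        (fun r => p ^ (2 * k * s - r * i)) (fun r _ => by positivity)
  calc b2 μ A k s
      ≤ ∑ X ∈ univ.powersetCard k, ∑ Y ∈ {Y ∈ univ.powersetCard k | Y ∩ X ≠ ∅ ∧ Y ≠ X},
          g #(Y ∩ X) := by
        refine sum_le_sum fun X hX => sum_le_sum fun Y hY => ?_
        have hY' := (mem_powersetCard.mp (mem_filter.mp hY).1).2
        exact (pXY_le_sum_sum hindep hp hA (mem_powersetCard.mp hX).2 hY').trans (hpairs _)
    _ ≤ _ := by
        simpa only [Fintype.card_fin] using sum_sum_card_inter_le (α := Fin n)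
          (fun X => {Y ∈ univ.powersetCard k | Y ∩ X ≠ ∅ ∧ Y ≠ X}) (fun _ => filter_subset _ _)
          (Icc 1 (k - 1))
          (fun X hX Y hY => card_inter_mem_Icc_of_ne (mem_powersetCard.mp hX).2
            (mem_powersetCard.mp (mem_filter.mp hY).1).2 (mem_filter.mp hY).2.1
            (mem_filter.mp hY).2.2)
          g (fun i _ => by positivity)

end Model

theorem b2_term_exponent_le {k s c i r : ℝ} (hs : 1 ≤ s) (hi : 0 ≤ i) (hik : i ≤ k - 1) (hr : 0 ≤ r)
    (hrs : r ≤ s) (hcs : c * s ≤ (k - 1) * (s - 1)) :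
    k + (k - i) + (c * s + c * (s - r)) - (2 * k * s - r * i)
      ≤ 2 * k * (1 - s) + s * (k - 1 + c) - k + 1 := by
  -- `s` times the slack is `(s - r)` times its value at `r = 0` plus `r` times its value at `r = s`
  have h0 : 0 ≤ (s - r) * (i + (k - 1) * (s - 1) - c * s) :=
    mul_nonneg (by linarith) (by linarith)
  have hs' : 0 ≤ r * ((k - 1 - i) * (s - 1)) :=
    mul_nonneg hr (mul_nonneg (by linarith) (by linarith))
  nlinarith

theorem isBigO_pow_of_isBigO_rpow {f : ℕ → ℝ} {c : ℝ} (hf : f =O[atTop] fun n => (n : ℝ) ^ c)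
    (m : ℕ) : (fun n => f n ^ m) =O[atTop] fun n => (n : ℝ) ^ (c * m) :=
  (hf.pow m).congr_right fun n => (Real.rpow_mul_natCast n.cast_nonneg c m).symm

theorem isBigO_natCast_pow (m : ℕ) :
    (fun n : ℕ => (n : ℝ) ^ m) =O[atTop] fun n => (n : ℝ) ^ (m : ℝ) :=
  (isBigO_refl _ _).congr_right fun _ => (Real.rpow_natCast _ m).symm

theorem isBigO_div_natCast_pow (γ : ℝ) (m : ℕ) :
    (fun n : ℕ => (γ / n) ^ m) =O[atTop] fun n => (n : ℝ) ^ (-(m : ℝ)) :=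
  ((isBigO_refl (fun n : ℕ => (n : ℝ) ^ (-(m : ℝ))) atTop).const_mul_left (γ ^ m)).congr_left
    fun n => by rw [Real.rpow_neg n.cast_nonneg, Real.rpow_natCast, div_pow, div_eq_mul_inv]

theorem isBigO_b2_bound {k s : ℕ} (hs : 1 ≤ s) (γ c : ℝ) (hcs : c * s ≤ ((k : ℝ) - 1) * (s - 1))
    {t : ℕ → ℕ} (ht : (fun n => (t n : ℝ)) =O[atTop] fun n => (n : ℝ) ^ c) :
    (fun n : ℕ => ∑ i ∈ Icc 1 (k - 1), (n ^ k * (k.choose i * n ^ (k - i)) : ℝ) *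
      ∑ r ∈ range (s + 1), (t n ^ s * (s.choose r * t n ^ (s - r)) : ℝ) *
        (γ / n) ^ (2 * k * s - r * i))
      =O[atTop] fun n => (n : ℝ) ^ (2 * (k : ℝ) * (1 - (s : ℝ)) + (s : ℝ) * ((k : ℝ) - 1 + c)
          - (k : ℝ) + 1) := by
  refine IsBigO.fun_sum fun i hi => ?_
  obtain ⟨hi1, hik⟩ := mem_Icc.mp hi
  have hnk := (isBigO_natCast_pow k).mul_atTop_rpow_natCast_of_isBigO_rpow _ _ _
    ((isBigO_natCast_pow (k - i)).const_mul_left (k.choose i : ℝ)) le_rfl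
  refine hnk.mul_atTop_rpow_natCast_of_isBigO_rpow _ _ _
    (IsBigO.fun_sum fun r hr => ?_) (add_sub_cancel _ _).le
  have hrs := mem_range_succ_iff.mp hr
  have htt := (isBigO_pow_of_isBigO_rpow ht s).mul_atTop_rpow_natCast_of_isBigO_rpow _ _ _
    ((isBigO_pow_of_isBigO_rpow ht (s - r)).const_mul_left (s.choose r : ℝ)) le_rfl
  refine htt.mul_atTop_rpow_natCast_of_isBigO_rpow _ _ _
    (isBigO_div_natCast_pow γ (2 * k * s - r * i)) ?_
  have hri : r * i ≤ 2 * k * s := by nlinarith [Nat.mul_le_mul hrs (show i ≤ k by omega)]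
  have := b2_term_exponent_le (k := k) (s := s) (c := c) (i := i) (r := r) (by exact_mod_cast hs)
    i.cast_nonneg (by rw [le_sub_iff_add_le]; exact_mod_cast (by omega : i + 1 ≤ k))
    r.cast_nonneg (by exact_mod_cast hrs) hcs
  push_cast [Nat.cast_sub (by omega : i ≤ k), Nat.cast_sub hrs, Nat.cast_sub hri] at this ⊢
  linarith

theorem b2_isBigO_fixed_p_general
    {k s : ℕ} (hs : 2 ≤ s)
    (γ : ℝ) (hγ : 0 < γ)
    (c : ℝ) (hc : c ≤ ((k : ℝ) - 1) * (1 - 1 / (s : ℝ)))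
    {Ω : ℕ → Type*} [∀ n, MeasurableSpace (Ω n)]
    (μ : ∀ n, Measure (Ω n))
    (t : ℕ → ℕ)
    (htΘ : (fun n => (t n : ℝ)) =Θ[atTop] fun n => (n : ℝ) ^ c)
    (A : ∀ n, Fin (t n) → Fin n → Ω n → Bool)
    (hindep : ∀ n, iIndepFun
      (fun p : Fin (t n) × Fin n => A n p.1 p.2) (μ n))
    (hfreq : ∀ n : ℕ, γ ≤ n → ∀ j i,
      μ n {ω | A n j i ω = true} = ENNReal.ofReal (γ / n)) :
    (fun n => b2 (μ n) (A n) k s)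
      =O[atTop] fun n =>
        (n : ℝ) ^ (2 * (k : ℝ) * (1 - (s : ℝ)) + (s : ℝ) * ((k : ℝ) - 1 + c)
          - (k : ℝ) + 1) := by
  have hcs : c * s ≤ ((k : ℝ) - 1) * (s - 1) := by
    have hs0 : (0 : ℝ) < s := by exact_mod_cast (by omega : 0 < s)
    calc c * s ≤ ((k : ℝ) - 1) * (1 - 1 / s) * s := mul_le_mul_of_nonneg_right hc hs0.le
      _ = ((k : ℝ) - 1) * (s - 1) := by field_simp
  refine IsBigO.trans (IsBigO.of_bound' ?_)
    (isBigO_b2_bound (by omega) γ c hcs htΘ.isBigO)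
  filter_upwards [eventually_ge_atTop ⌈γ⌉₊] with n hn
  have hγn : γ ≤ n := Nat.ceil_le.mp hn
  rw [Real.norm_of_nonneg (b2_nonneg k s)]
  exact (b2_le_sum (hindep n) (div_nonneg hγ.le n.cast_nonneg) (hfreq n hγn) k s).trans
    (Real.le_norm_self _)

/-- **Asymptotics for `b₂(s)` in the fixed-`p` model.**
Fix `k, s ≥ 2`, `γ > 0` and `0 < c ≤ (k−1)(1−1/s)`; consider for each `n` the random dataset
model with common item probability `p = γ/n` and `t(n) = Θ(n^c)` transactions. Then, as
`n → ∞`, `b₂(s) = O(n^{2k(1−s) + s(k−1+c) − k + 1})`. -/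
theorem b2_isBigO_fixed_p
    {k s : ℕ} (hk : 2 ≤ k) (hs : 2 ≤ s)
    (γ : ℝ) (hγ : 0 < γ)
    (c : ℝ) (hc0 : 0 < c) (hc : c ≤ ((k : ℝ) - 1) * (1 - 1 / (s : ℝ)))
    {Ω : ℕ → Type*} [∀ n, MeasurableSpace (Ω n)]
    (μ : ∀ n, Measure (Ω n)) [∀ n, IsProbabilityMeasure (μ n)]
    (t : ℕ → ℕ)
    (htΘ : (fun n => (t n : ℝ)) =Θ[atTop] fun n => (n : ℝ) ^ c)
    (A : ∀ n, Fin (t n) → Fin n → Ω n → Bool)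
    (hmeas : ∀ n j i, Measurable (A n j i))
    (hindep : ∀ n, iIndepFun
      (fun p : Fin (t n) × Fin n => A n p.1 p.2) (μ n))
    (hfreq : ∀ n : ℕ, γ ≤ n → ∀ j i,
      μ n {ω | A n j i ω = true} = ENNReal.ofReal (γ / n)) :
    (fun n => b2 (μ n) (A n) k s)
      =O[atTop] fun n =>
        (n : ℝ) ^ (2 * (k : ℝ) * (1 - (s : ℝ)) + (s : ℝ) * ((k : ℝ) - 1 + c)
          - (k : ℝ) + 1) :=
  b2_isBigO_fixed_p_general hs γ hγ c hc μ t htΘ A hindep hfreq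

end PaperModel
end
end

section
/- In the mixed random dataset model, let X ≠ Y be k-element itemsets with X ∩ Y ≠ ∅ and let 1 ≤ s ≤ t. Then almost surely E[Z_X Z_Y | R_1,…,R_n] ≤ Σ_{i=0}^{s} C(t,i)·C(t−i,s−i)·C(t−s,s−i) · (∏_{x ∈ X∩Y} R_x^{2s−i}) · (∏_{x ∈ X∖Y} R_x^s) · (∏_{y ∈ Y∖X} R_y^s). -/
/-!
Given `R = r`, the table `A` has independent Bernoulli(`r i`) entries, so `E[Z_X Z_Y | R]` is
the finite sum of `Z_X(b) Z_Y(b)` against the Bernoulli weights `w_r(b)` of all 0/1 tables `b`.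
If both supports are at least `s`, some pair `(S, T)` of `s`-sets of rows has a `1` in every
cell of `S × X ∪ T × Y`. A union bound over these pairs bounds the sum by
`Σ_{S,T} ∏_{(j,x) ∈ S × X ∪ T × Y} r x`, and splitting the cells by column turns each product into
`∏_{X ∩ Y} r ^ |S ∪ T| · ∏_{X \ Y} r ^ s · ∏_{Y \ X} r ^ s` with `|S ∪ T| = 2s - |S ∩ T|`.
There are at most `C(t,s) C(s,i) C(t-s,s-i) = C(t,i) C(t-i,s-i) C(t-s,s-i)` pairs with
`|S ∩ T| = i`.
-/

open MeasureTheory ProbabilityTheory Finset Filter Asymptotics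

noncomputable section

namespace PaperModel

variable {Ω : Type*}

/-- `m`-th moment `E[R^m]` of a distribution `ρ` on `ℝ`. -/
def moment (ρ : Measure ℝ) (m : ℕ) : ℝ := ∫ x, x ^ m ∂ρ

/-- The σ-algebra generated by the random frequencies `R_1, …, R_n`. -/
def sigmaR [MeasurableSpace Ω] {n : ℕ} (R : Fin n → Ω → ℝ) : MeasurableSpace Ω :=
  MeasurableSpace.comap (fun ω (i : Fin n) => R i ω) inferInstance

/-- **The mixed random dataset model**: `R_1, …, R_n` are i.i.d. with distribution `ρ`
(taking values in `[0,1]`), and, conditioned on `(R_1, …, R_n)`, the entries `A j i` are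
conditionally independent Bernoulli random variables with `Pr(A j i = 1 | R) = R i`.
The last clause expresses this conditional structure by giving the joint law of
`(R_1, …, R_n)` and any outcome pattern `b` of the table `A`. -/
def MixedModel [MeasurableSpace Ω] (μ : Measure Ω) {n t : ℕ}
    (R : Fin n → Ω → ℝ) (A : Fin t → Fin n → Ω → Bool) (ρ : Measure ℝ) : Prop :=
  (∀ i, Measurable (R i)) ∧
  (∀ j i, Measurable (A j i)) ∧
  (∀ i ω, R i ω ∈ Set.Icc (0 : ℝ) 1) ∧
  iIndepFun R μ ∧
  (∀ i, μ.map (R i) = ρ) ∧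
  (∀ b : Fin t → Fin n → Bool, ∀ B : Set (Fin n → ℝ), MeasurableSet B →
    μ ({ω | (fun i => R i ω) ∈ B} ∩ {ω | ∀ j i, A j i ω = b j i})
      = ∫⁻ ω in {ω | (fun i => R i ω) ∈ B},
          ∏ j, ∏ i, ENNReal.ofReal (if b j i then R i ω else 1 - R i ω) ∂μ)

section Bernoulli

variable {ι κ : Type*} [Fintype ι] [Fintype κ]

def bernoulliWeight (r : κ → ℝ) (b : ι → κ → Bool) : ℝ :=
  ∏ j, ∏ i, if b j i then r i else 1 - r i

theorem sum_ite_forall_mul_prod_bernoulli {R : Type*} [CommRing R] [DecidableEq ι]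
    (q : ι → R) (P : Finset ι) :
    ∑ c : ι → Bool, (if ∀ p ∈ P, c p = true then 1 else 0) * ∏ p, (if c p then q p else 1 - q p)
      = ∏ p ∈ P, q p := by
  calc _ = ∑ c : ι → Bool, ∏ p, ((if p ∈ P then (if c p then 1 else 0) else 1)
            * if c p then q p else 1 - q p) := by
        refine sum_congr rfl fun c _ => ?_
        rw [prod_mul_distrib, Fintype.prod_ite_mem, prod_boole]
        congr
    _ = ∏ p, ∑ x : Bool, (if p ∈ P then (if x then 1 else 0) else 1)
            * if x then q p else 1 - q p :=
        (Fintype.prod_sum fun p (x : Bool) => (if p ∈ P then (if x then 1 else 0) else 1)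
            * if x then q p else 1 - q p).symm
    _ = ∏ p, if p ∈ P then q p else 1 :=
        prod_congr rfl fun p _ => by by_cases hp : p ∈ P <;> simp [hp]
    _ = ∏ p ∈ P, q p := Fintype.prod_ite_mem P q

theorem sum_ite_forall_mul_bernoulliWeight [DecidableEq ι] [DecidableEq κ] (r : κ → ℝ)
    (P : Finset (ι × κ)) :
    ∑ b : ι → κ → Bool, (if ∀ p ∈ P, b p.1 p.2 = true then 1 else 0) * bernoulliWeight r b
      = ∏ p ∈ P, r p.2 := by
  rw [← sum_ite_forall_mul_prod_bernoulli (fun p => r p.2) P]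
  refine (Fintype.sum_equiv (Equiv.curry ι κ Bool) _ _ fun c => ?_).symm
  rw [bernoulliWeight, Fintype.prod_prod_type]
  rfl

theorem ite_mem_Icc_one_sub {a : ℝ} (ha : a ∈ Set.Icc 0 1) (x : Bool) :
    (if x then a else 1 - a) ∈ Set.Icc 0 1 := by
  cases x
  exacts [Set.Icc.mem_iff_one_sub_mem.1 ha, ha]

variable {r : κ → ℝ}

theorem bernoulliWeight_nonneg (hr : ∀ i, r i ∈ Set.Icc 0 1) (b : ι → κ → Bool) :
    0 ≤ bernoulliWeight r b :=
  prod_nonneg fun j _ => prod_nonneg fun i _ => (ite_mem_Icc_one_sub (hr i) (b j i)).1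

theorem bernoulliWeight_le_one (hr : ∀ i, r i ∈ Set.Icc 0 1) (b : ι → κ → Bool) :
    bernoulliWeight r b ≤ 1 :=
  prod_le_one (fun j _ => prod_nonneg fun i _ => (ite_mem_Icc_one_sub (hr i) (b j i)).1)
    fun j _ => prod_le_one (fun i _ => (ite_mem_Icc_one_sub (hr i) (b j i)).1)
      fun i _ => (ite_mem_Icc_one_sub (hr i) (b j i)).2

theorem measurable_bernoulliWeight (b : ι → κ → Bool) :
    Measurable fun r : κ → ℝ => bernoulliWeight r b := by
  refine Finset.measurable_prod _ fun j _ => Finset.measurable_prod _ fun i _ => ?_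
  cases b j i <;> simp only [Bool.false_eq_true, if_false, if_true] <;> fun_prop

end Bernoulli

section Counting

variable {α : Type*} [Fintype α] [DecidableEq α]

theorem card_filter_card_inter_eq_le (S : Finset α) (s i : ℕ) :
    #{T ∈ powersetCard s univ | #(S ∩ T) = i}
      ≤ (#S).choose i * (Fintype.card α - #S).choose (s - i) := by
  rw [← card_powersetCard i S, ← card_compl S, ← card_powersetCard (s - i) Sᶜ, ← card_product]
  refine card_le_card_of_injOn (fun T => (S ∩ T, T \ S)) (fun T hT => ?_)
    fun T₁ _ T₂ _ h => ?_
  · obtain ⟨hT, hi⟩ := mem_filter.1 hT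
    have hsplit := card_sdiff_add_card_inter T S
    rw [inter_comm, hi, (mem_powersetCard.1 hT).2] at hsplit
    simp only [coe_product, Set.mem_prod, mem_coe, mem_powersetCard]
    exact ⟨⟨inter_subset_left, hi⟩, fun x hx => mem_compl.2 (mem_sdiff.1 hx).2, by omega⟩
  · obtain ⟨hinter, hsdiff⟩ := Prod.ext_iff.1 h
    rw [← sdiff_union_inter T₁ S, ← sdiff_union_inter T₂ S, inter_comm T₁, inter_comm T₂]
    exact congrArg₂ (· ∪ ·) hsdiff hinter

theorem sum_powersetCard_product_le (s : ℕ) (F : ℕ → ℝ) (hF : ∀ i, 0 ≤ F i) :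
    ∑ q ∈ powersetCard s (univ : Finset α) ×ˢ powersetCard s univ, F #(q.1 ∩ q.2)
      ≤ ∑ i ∈ range (s + 1), ((Fintype.card α).choose i : ℝ)
          * ((Fintype.card α - i).choose (s - i) : ℝ) * ((Fintype.card α - s).choose (s - i) : ℝ)
          * F i := by
  set m := Fintype.card α
  have hfiber : ∀ S ∈ powersetCard s (univ : Finset α),
      ∑ T ∈ powersetCard s univ, F #(S ∩ T)
        ≤ ∑ i ∈ range (s + 1), ((s.choose i * (m - s).choose (s - i) : ℕ) : ℝ) * F i := by
    intro S hS
    have hmaps : ∀ T ∈ powersetCard s (univ : Finset α), #(S ∩ T) ∈ range (s + 1) :=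
      fun T _ => mem_range_succ_iff.2 <| (card_le_card inter_subset_left).trans
        (mem_powersetCard.1 hS).2.le
    rw [← sum_fiberwise_of_maps_to hmaps]
    refine sum_le_sum fun i _ => ?_
    rw [sum_congr rfl fun T hT => by rw [(mem_filter.1 hT).2], sum_const, nsmul_eq_mul]
    gcongr
    · exact hF i
    · have := card_filter_card_inter_eq_le S s i
      rwa [(mem_powersetCard.1 hS).2] at this
  calc _ = ∑ S ∈ powersetCard s (univ : Finset α), ∑ T ∈ powersetCard s univ, F #(S ∩ T) :=
        sum_product _ _ _
    _ ≤ ∑ S ∈ powersetCard s (univ : Finset α),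
          ∑ i ∈ range (s + 1), ((s.choose i * (m - s).choose (s - i) : ℕ) : ℝ) * F i :=
        sum_le_sum hfiber
    _ = _ := by
        rw [sum_const, card_powersetCard, card_univ, nsmul_eq_mul, mul_sum]
        refine sum_congr rfl fun i hi => ?_
        rw [← mul_assoc]
        congr 1
        norm_cast
        rw [← mul_assoc, Nat.choose_mul (mem_range_succ_iff.1 hi)]

end Counting

section Witnesses

variable {ι κ : Type*}

def tableSupport [Fintype ι] (b : ι → κ → Bool) (X : Finset κ) : ℕ :=
  #{j | ∀ i ∈ X, b j i = true}

variable [DecidableEq ι] [DecidableEq κ]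

theorem prod_union_product_snd {M : Type*} [CommMonoid M] (f : κ → M) (S T : Finset ι)
    (X Y : Finset κ) :
    ∏ p ∈ S ×ˢ X ∪ T ×ˢ Y, f p.2
      = (∏ x ∈ X ∩ Y, f x ^ #(S ∪ T)) * (∏ x ∈ X \ Y, f x ^ #S) * ∏ x ∈ Y \ X, f x ^ #T := by
  have hcells : S ×ˢ X ∪ T ×ˢ Y = ((S ∪ T) ×ˢ (X ∩ Y) ∪ S ×ˢ (X \ Y)) ∪ T ×ˢ (Y \ X) := by
    ext ⟨j, i⟩
    simp only [mem_union, mem_product, mem_inter, Finset.mem_sdiff]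
    tauto
  have hprod : ∀ (U : Finset ι) (V : Finset κ), ∏ p ∈ U ×ˢ V, f p.2 = ∏ x ∈ V, f x ^ #U :=
    fun U V => by rw [prod_product_right, prod_congr rfl fun x _ => prod_const (f x)]
  rw [hcells, prod_union, prod_union, hprod, hprod, hprod]
  all_goals
    rw [disjoint_left]
    rintro ⟨j, i⟩
    simp only [mem_union, mem_product, mem_inter, Finset.mem_sdiff]
    tauto

variable [Fintype ι]

theorem boole_mul_boole_le_sum_witnesses (s : ℕ) (b : ι → κ → Bool) (X Y : Finset κ) :
    (if s ≤ tableSupport b X then (1 : ℝ) else 0) * (if s ≤ tableSupport b Y then 1 else 0)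
      ≤ ∑ q ∈ powersetCard s (univ : Finset ι) ×ˢ powersetCard s univ,
          if ∀ p ∈ q.1 ×ˢ X ∪ q.2 ×ˢ Y, b p.1 p.2 = true then 1 else 0 := by
  have hnonneg : ∀ q ∈ powersetCard s (univ : Finset ι) ×ˢ powersetCard s univ,
      (0 : ℝ) ≤ if ∀ p ∈ q.1 ×ˢ X ∪ q.2 ×ˢ Y, b p.1 p.2 = true then 1 else 0 :=
    fun _ _ => by split <;> norm_num
  by_cases h : s ≤ tableSupport b X ∧ s ≤ tableSupport b Y
  · obtain ⟨S, hSX, hS⟩ := exists_subset_card_eq h.1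
    obtain ⟨T, hTY, hT⟩ := exists_subset_card_eq h.2
    have hmem : (S, T) ∈ powersetCard s (univ : Finset ι) ×ˢ powersetCard s univ :=
      mem_product.2 ⟨mem_powersetCard.2 ⟨subset_univ S, hS⟩, mem_powersetCard.2 ⟨subset_univ T, hT⟩⟩
    have hcells : ∀ p ∈ S ×ˢ X ∪ T ×ˢ Y, b p.1 p.2 = true := by
      rintro ⟨j, i⟩ hp
      rcases mem_union.1 hp with hp | hp <;> obtain ⟨hj, hi⟩ := mem_product.1 hp
      · exact (mem_filter.1 (hSX hj)).2 i hi
      · exact (mem_filter.1 (hTY hj)).2 i hi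
    rw [if_pos h.1, if_pos h.2, one_mul]
    exact (if_pos hcells).symm.le.trans (single_le_sum hnonneg hmem)
  · have hzero : (if s ≤ tableSupport b X then (1 : ℝ) else 0)
        * (if s ≤ tableSupport b Y then 1 else 0) = 0 := by
      rcases not_and_or.1 h with h | h <;> simp [h]
    exact hzero.le.trans (sum_nonneg hnonneg)

theorem sum_boole_mul_boole_mul_bernoulliWeight_le [Fintype κ] (s : ℕ) {r : κ → ℝ}
    (hr : ∀ i, r i ∈ Set.Icc 0 1) (X Y : Finset κ) :
    ∑ b : ι → κ → Bool,
        (if s ≤ tableSupport b X then (1 : ℝ) else 0) * (if s ≤ tableSupport b Y then 1 else 0)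
          * bernoulliWeight r b
      ≤ ∑ i ∈ range (s + 1), ((Fintype.card ι).choose i : ℝ)
          * ((Fintype.card ι - i).choose (s - i) : ℝ) * ((Fintype.card ι - s).choose (s - i) : ℝ)
          * (∏ x ∈ X ∩ Y, r x ^ (2 * s - i)) * (∏ x ∈ X \ Y, r x ^ s)
          * (∏ y ∈ Y \ X, r y ^ s) := by
  set F : ℕ → ℝ := fun i =>
    (∏ x ∈ X ∩ Y, r x ^ (2 * s - i)) * (∏ x ∈ X \ Y, r x ^ s) * ∏ y ∈ Y \ X, r y ^ s
  have hF : ∀ i, 0 ≤ F i := fun i =>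
    mul_nonneg (mul_nonneg (prod_nonneg fun x _ => pow_nonneg (hr x).1 _)
      (prod_nonneg fun x _ => pow_nonneg (hr x).1 _)) (prod_nonneg fun x _ => pow_nonneg (hr x).1 _)
  calc _ ≤ ∑ b : ι → κ → Bool, (∑ q ∈ powersetCard s (univ : Finset ι) ×ˢ powersetCard s univ,
            if ∀ p ∈ q.1 ×ˢ X ∪ q.2 ×ˢ Y, b p.1 p.2 = true then 1 else 0) * bernoulliWeight r b :=
        sum_le_sum fun b _ => mul_le_mul_of_nonneg_right
          -- the two sums differ in the decidability instance of `∀ p ∈ _`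
          ((boole_mul_boole_le_sum_witnesses s b X Y).trans_eq
            (sum_congr rfl fun _ _ => by congr)) (bernoulliWeight_nonneg hr b)
    _ = ∑ q ∈ powersetCard s (univ : Finset ι) ×ˢ powersetCard s univ,
          ∏ p ∈ q.1 ×ˢ X ∪ q.2 ×ˢ Y, r p.2 := by
        simp_rw [sum_mul]
        rw [sum_comm]
        exact sum_congr rfl fun q _ => sum_ite_forall_mul_bernoulliWeight r _
    _ = ∑ q ∈ powersetCard s (univ : Finset ι) ×ˢ powersetCard s univ, F #(q.1 ∩ q.2) := by
        refine sum_congr rfl fun q hq => ?_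
        obtain ⟨hS, hT⟩ := mem_product.1 hq
        rw [mem_powersetCard] at hS hT
        have hunion := card_union_add_card_inter q.1 q.2
        rw [prod_union_product_snd, hS.2, hT.2, show #(q.1 ∪ q.2) = 2 * s - #(q.1 ∩ q.2) by omega]
    _ ≤ _ := sum_powersetCard_product_le s F hF
    _ = _ := sum_congr rfl fun i _ => by ring

end Witnesses

section ConditionalExpectation

variable [MeasurableSpace Ω] {μ : Measure Ω} {n t : ℕ} {R : Fin n → Ω → ℝ}
  {A : Fin t → Fin n → Ω → Bool} {ρ : Measure ℝ}

theorem integrable_bernoulliWeight_comp [IsFiniteMeasure μ] (hR : ∀ i, Measurable (R i))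
    (hR01 : ∀ i ω, R i ω ∈ Set.Icc 0 1) (b : Fin t → Fin n → Bool) :
    Integrable (fun ω => bernoulliWeight (fun i => R i ω) b) μ :=
  .of_bound ((measurable_bernoulliWeight b).comp (measurable_pi_lambda _ hR)).aestronglyMeasurable 1
    (.of_forall fun ω => by
      rw [Real.norm_of_nonneg (bernoulliWeight_nonneg (hR01 · ω) b)]
      exact bernoulliWeight_le_one (hR01 · ω) b)

theorem measureReal_inter_table_eq [IsFiniteMeasure μ] (hM : MixedModel μ R A ρ)
    (b : Fin t → Fin n → Bool) {B : Set (Fin n → ℝ)} (hB : MeasurableSet B) :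
    μ.real ((fun ω i => R i ω) ⁻¹' B ∩ (fun ω j i => A j i ω) ⁻¹' {b})
      = ∫ ω in (fun ω i => R i ω) ⁻¹' B, bernoulliWeight (fun i => R i ω) b ∂μ := by
  obtain ⟨hR, -, hR01, -, -, hjoint⟩ := hM
  have hpattern : (fun ω j i => A j i ω) ⁻¹' {b} = {ω | ∀ j i, A j i ω = b j i} := by
    ext ω
    simp [funext_iff]
  have hweight : ∀ ω, ∏ j, ∏ i, ENNReal.ofReal (if b j i then R i ω else 1 - R i ω)
      = ENNReal.ofReal (bernoulliWeight (fun i => R i ω) b) := fun ω => by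
    have h0 : ∀ j i, 0 ≤ if b j i then R i ω else 1 - R i ω :=
      fun j i => (ite_mem_Icc_one_sub (hR01 i ω) (b j i)).1
    rw [bernoulliWeight, ENNReal.ofReal_prod_of_nonneg fun j _ => prod_nonneg fun i _ => h0 j i]
    exact prod_congr rfl fun j _ => (ENNReal.ofReal_prod_of_nonneg fun i _ => h0 j i).symm
  have hrows : (fun ω i => R i ω) ⁻¹' B = {ω | (fun i => R i ω) ∈ B} := rfl
  rw [measureReal_def, hpattern, hrows, hjoint b B hB, lintegral_congr hweight,
    ← ofReal_integral_eq_lintegral_ofReal (integrable_bernoulliWeight_comp hR hR01 b).integrableOn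
      (.of_forall fun ω => bernoulliWeight_nonneg (hR01 · ω) b),
    ENNReal.toReal_ofReal (integral_nonneg fun ω => bernoulliWeight_nonneg (hR01 · ω) b)]

theorem condExp_comp_table_ae_eq [IsFiniteMeasure μ] (hM : MixedModel μ R A ρ)
    (φ : (Fin t → Fin n → Bool) → ℝ) :
    μ[fun ω => φ (fun j i => A j i ω) | sigmaR R]
      =ᵐ[μ] fun ω => ∑ b, φ b * bernoulliWeight (fun i => R i ω) b := by
  have ⟨hR, hA, hR01, _⟩ := hM
  have hπ : Measurable fun ω (i : Fin n) => R i ω := measurable_pi_lambda _ hR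
  have htable : Measurable fun ω j i => A j i ω :=
    measurable_pi_lambda _ fun j => measurable_pi_lambda _ fun i => hA j i
  refine (ae_eq_condExp_of_forall_setIntegral_eq hπ.comap_le
    (Integrable.of_finite.comp_measurable htable)
    (fun _ _ _ => (integrable_finsetSum _ fun b _ =>
      (integrable_bernoulliWeight_comp hR hR01 b).const_mul (φ b)).integrableOn)
    ?_ ?_).symm
  · rintro _ ⟨B, hB, rfl⟩ -
    rw [integral_finsetSum _ fun b _ =>
        ((integrable_bernoulliWeight_comp hR hR01 b).const_mul (φ b)).integrableOn,
      Function.comp_def, ← integral_map htable.aemeasurable (f := φ) .of_discrete,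
      integral_fintype Integrable.of_finite]
    refine sum_congr rfl fun b _ => ?_
    rw [integral_const_mul, smul_eq_mul, measureReal_def,
      Measure.map_apply htable (measurableSet_singleton b), Measure.restrict_apply
      (htable (measurableSet_singleton b)), Set.inter_comm, ← measureReal_def,
      measureReal_inter_table_eq hM b hB, mul_comm]
  · exact ((Finset.measurable_sum _ fun b _ => (measurable_bernoulliWeight b).const_mul (φ b)).comp
      (comap_measurable _)).aestronglyMeasurable

end ConditionalExpectation

theorem condEZXZY_bound_mixed_general
    {Ω : Type*} [MeasurableSpace Ω] (μ : Measure Ω) [IsProbabilityMeasure μ]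
    {n t : ℕ} (R : Fin n → Ω → ℝ) (A : Fin t → Fin n → Ω → Bool)
    (ρ : Measure ℝ)
    (hM : MixedModel μ R A ρ)
    (s : ℕ)
    (X Y : Finset (Fin n)) :
    ∀ᵐ ω ∂μ,
      (μ[fun ω' => Z A s X ω' * Z A s Y ω' | sigmaR R]) ω
        ≤ ∑ i ∈ Finset.range (s + 1),
            (t.choose i : ℝ) * ((t - i).choose (s - i) : ℝ) * ((t - s).choose (s - i) : ℝ)
              * (∏ x ∈ X ∩ Y, R x ω ^ (2 * s - i))
              * (∏ x ∈ X \ Y, R x ω ^ s)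
              * (∏ y ∈ Y \ X, R y ω ^ s) := by
  set φ : (Fin t → Fin n → Bool) → ℝ := fun b =>
    (if s ≤ tableSupport b X then 1 else 0) * (if s ≤ tableSupport b Y then 1 else 0)
  have hZ : (fun ω => Z A s X ω * Z A s Y ω) = fun ω => φ (fun j i => A j i ω) := by
    ext ω
    simp only [φ, Z, support, tableSupport]
    -- the two filters differ in the decidability instance of `∀ i ∈ X`
    congr
  filter_upwards [hZ ▸ condExp_comp_table_ae_eq hM φ] with ω hω
  have hbound := sum_boole_mul_boole_mul_bernoulliWeight_le (ι := Fin t) s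
    (fun i => hM.2.2.1 i ω) X Y
  rw [Fintype.card_fin] at hbound
  exact hω.trans_le hbound

/-- **Conditional bound on `E[Z_X Z_Y | R]` in the mixed model.**
Let `X ≠ Y` be `k`-element itemsets with `X ∩ Y ≠ ∅` and `1 ≤ s ≤ t`. Then almost surely
`E[Z_X Z_Y | R_1,…,R_n] ≤ Σ_{i=0}^{s} C(t,i)·C(t−i,s−i)·C(t−s,s−i)
  · (∏_{x ∈ X∩Y} R_x^{2s−i}) · (∏_{x ∈ X∖Y} R_x^s) · (∏_{y ∈ Y∖X} R_y^s)`. -/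
theorem condEZXZY_bound_mixed
    {Ω : Type*} [MeasurableSpace Ω] (μ : Measure Ω) [IsProbabilityMeasure μ]
    {n t : ℕ} (R : Fin n → Ω → ℝ) (A : Fin t → Fin n → Ω → Bool)
    (ρ : Measure ℝ) [IsProbabilityMeasure ρ]
    (hM : MixedModel μ R A ρ)
    (k s : ℕ) (hk : 1 ≤ k) (hs : 1 ≤ s) (hst : s ≤ t)
    (X Y : Finset (Fin n)) (hX : X.card = k) (hY : Y.card = k) (hne : X ≠ Y)
    (hXY : X ∩ Y ≠ ∅) :
    ∀ᵐ ω ∂μ,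
      (μ[fun ω' => Z A s X ω' * Z A s Y ω' | sigmaR R]) ω
        ≤ ∑ i ∈ Finset.range (s + 1),
            (t.choose i : ℝ) * ((t - i).choose (s - i) : ℝ) * ((t - s).choose (s - i) : ℝ)
              * (∏ x ∈ X ∩ Y, R x ω ^ (2 * s - i))
              * (∏ x ∈ X \ Y, R x ω ^ s)
              * (∏ y ∈ Y \ X, R y ω ^ s) :=
  condEZXZY_bound_mixed_general μ R A ρ hM s X Y

end PaperModel
end
end
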